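/- arXiv:1209.2770 — 8 statements merged into one kernel-verified Lean document; each statement's English description precedes it below -/
import Mathlib

section
/- Let C be a preadditive category with a zero object and binary biproducts in which every Hom-set is finite. Then every object X of C is isomorphic to a biproduct of finitely many indecomposable objects; moreover, for any isomorphism X ≅ X₁ ⊞ X₂ ⊞ ⋯ ⊞ X_s with all X_i nonzero, the number of summands s is at most the cardinality of the endomorphism monoid End(X). -/
/-!
Since `End (A ⊞ B)` is in bijection with `End A × (A ⟶ B) × (B ⟶ A) × End B`, and a nonzero
object has at least two endomorphisms, splitting off a nonzero summand strictly increases the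
(finite) number of endomorphisms. Strong induction on `|End X|` therefore splits `X` into
indecomposables, and a decomposition into `s` nonzero summands forces `|End X| ≥ s`.
-/

open CategoryTheory CategoryTheory.Limits ZeroObject

/-- An object of a preadditive category with a zero object and binary biproducts is
*indecomposable* if it is nonzero and any biproduct decomposition has a zero summand. -/
def IsIndecomposableObj {C : Type*} [Category C] [Preadditive C]
    [HasZeroObject C] [HasBinaryBiproducts C] (X : C) : Prop :=
  ¬ IsZero X ∧ ∀ A B : C, (X ≅ A ⊞ B) → IsZero A ∨ IsZero B

/-- The (iterated binary) biproduct `X₁ ⊞ (X₂ ⊞ (⋯ ⊞ 0))` of a finite list of objects. -/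
noncomputable def listBiproduct {C : Type*} [Category C] [Preadditive C]
    [HasZeroObject C] [HasBinaryBiproducts C] (l : List C) : C :=
  l.foldr (fun X Y => X ⊞ Y) 0

namespace CategoryTheory

variable {C : Type*} [Category C]

theorem Iso.natCard_end_eq {X Y : C} (e : X ≅ Y) : Nat.card (X ⟶ X) = Nat.card (Y ⟶ Y) :=
  Nat.card_congr (e.homCongr e)

section Preadditive

variable [Preadditive C]

theorem one_lt_natCard_end [∀ X Y : C, Finite (X ⟶ Y)] {A : C} (hA : ¬IsZero A) :
    1 < Nat.card (A ⟶ A) := by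
  have : Nontrivial (A ⟶ A) := ⟨𝟙 A, 0, mt (IsZero.iff_id_eq_zero A).2 hA⟩
  exact Finite.one_lt_card

variable [HasBinaryBiproducts C]

noncomputable def Limits.biprod.homToEquiv (X A B : C) : (X ⟶ A ⊞ B) ≃ (X ⟶ A) × (X ⟶ B) where
  toFun f := (f ≫ biprod.fst, f ≫ biprod.snd)
  invFun p := biprod.lift p.1 p.2
  left_inv f := by ext <;> simp
  right_inv p := by simp

noncomputable def Limits.biprod.homFromEquiv (A B Y : C) : (A ⊞ B ⟶ Y) ≃ (A ⟶ Y) × (B ⟶ Y) where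
  toFun f := (biprod.inl ≫ f, biprod.inr ≫ f)
  invFun p := biprod.desc p.1 p.2
  left_inv f := by ext <;> simp
  right_inv p := by simp

theorem natCard_end_biprod (A B : C) :
    Nat.card (A ⊞ B ⟶ A ⊞ B) =
      Nat.card (A ⟶ A) * (Nat.card (A ⟶ B) * (Nat.card (B ⟶ A) * Nat.card (B ⟶ B))) := by
  rw [Nat.card_congr ((biprod.homFromEquiv A B (A ⊞ B)).trans
    ((biprod.homToEquiv A A B).prodCongr (biprod.homToEquiv B A B)))]
  simp only [Nat.card_prod, mul_assoc]

variable [∀ X Y : C, Finite (X ⟶ Y)]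

theorem natCard_end_lt_natCard_end_biprod_left (A : C) {B : C} (hB : ¬IsZero B) :
    Nat.card (A ⟶ A) < Nat.card (A ⊞ B ⟶ A ⊞ B) := by
  rw [natCard_end_biprod]
  refine lt_mul_of_one_lt_right Nat.card_pos ?_
  calc 1 < Nat.card (B ⟶ B) := one_lt_natCard_end hB
    _ ≤ Nat.card (A ⟶ B) * (Nat.card (B ⟶ A) * Nat.card (B ⟶ B)) :=
      (le_mul_of_one_le_left' Nat.card_pos).trans (le_mul_of_one_le_left' Nat.card_pos)

theorem natCard_end_lt_natCard_end_biprod_right {A : C} (hA : ¬IsZero A) (B : C) :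
    Nat.card (B ⟶ B) < Nat.card (A ⊞ B ⟶ A ⊞ B) :=
  (biprod.braiding A B).natCard_end_eq ▸ natCard_end_lt_natCard_end_biprod_left B hA

end Preadditive

variable [Preadditive C] [HasZeroObject C] [HasBinaryBiproducts C]

noncomputable def listBiproductAppendIso (l₁ l₂ : List C) :
    listBiproduct (l₁ ++ l₂) ≅ listBiproduct l₁ ⊞ listBiproduct l₂ :=
  match l₁ with
  | [] => isoZeroBiprod (isZero_zero C)
  | a :: l => biprod.mapIso (Iso.refl a) (listBiproductAppendIso l l₂) ≪≫
      (biprod.associator a _ _).symm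

theorem exists_iso_biprod_of_not_isIndecomposableObj {X : C} (hX : ¬IsZero X)
    (h : ¬IsIndecomposableObj X) :
    ∃ A B : C, Nonempty (X ≅ A ⊞ B) ∧ ¬IsZero A ∧ ¬IsZero B := by
  simp only [IsIndecomposableObj, hX, not_false_eq_true, true_and, not_forall, not_or] at h
  obtain ⟨A, B, e, hA, hB⟩ := h
  exact ⟨A, B, ⟨e⟩, hA, hB⟩

variable [∀ X Y : C, Finite (X ⟶ Y)]

theorem exists_isIndecomposableObj_iso_listBiproduct (X : C) :
    ∃ l : List C, (∀ Y ∈ l, IsIndecomposableObj Y) ∧ Nonempty (X ≅ listBiproduct l) := by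
  induction hn : Nat.card (X ⟶ X) using Nat.strong_induction_on generalizing X with
  | _ n ih =>
    by_cases hX : IsZero X
    · exact ⟨[], by simp, ⟨hX.iso (isZero_zero C)⟩⟩
    by_cases hXind : IsIndecomposableObj X
    · exact ⟨[X], by simpa using hXind, ⟨isoBiprodZero (isZero_zero C)⟩⟩
    obtain ⟨A, B, ⟨e⟩, hA, hB⟩ := exists_iso_biprod_of_not_isIndecomposableObj hX hXind
    obtain ⟨lA, hlA, ⟨eA⟩⟩ :=
      ih _ (hn ▸ e.natCard_end_eq ▸ natCard_end_lt_natCard_end_biprod_left A hB) A rfl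
    obtain ⟨lB, hlB, ⟨eB⟩⟩ :=
      ih _ (hn ▸ e.natCard_end_eq ▸ natCard_end_lt_natCard_end_biprod_right hA B) B rfl
    exact ⟨lA ++ lB, List.forall_mem_append.2 ⟨hlA, hlB⟩,
      ⟨e ≪≫ biprod.mapIso eA eB ≪≫ (listBiproductAppendIso lA lB).symm⟩⟩

theorem length_le_natCard_end_listBiproduct {l : List C} (hl : ∀ Y ∈ l, ¬IsZero Y) :
    l.length ≤ Nat.card (listBiproduct l ⟶ listBiproduct l) := by
  induction l with
  | nil => exact Nat.zero_le _
  | cons a l ih =>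
    simp only [List.mem_cons, forall_eq_or_imp] at hl
    exact (ih hl.2).trans_lt (natCard_end_lt_natCard_end_biprod_right hl.1 _)

end CategoryTheory

/-- In a Hom-finite preadditive category with a zero object and binary
biproducts, every object is isomorphic to a biproduct of finitely many indecomposable
objects; moreover, for any isomorphism `X ≅ X₁ ⊞ ⋯ ⊞ X_s` with all `X_i` nonzero, the
number `s` of summands is at most the cardinality of `End X`. -/
theorem statement5 (C : Type*) [Category C] [Preadditive C]
    [HasZeroObject C] [HasBinaryBiproducts C]
    (homfin : ∀ X Y : C, Finite (X ⟶ Y)) :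
    (∀ X : C, ∃ l : List C, (∀ Y ∈ l, IsIndecomposableObj Y) ∧
      Nonempty (X ≅ listBiproduct l))
    ∧ (∀ (X : C) (l : List C), (∀ Y ∈ l, ¬ IsZero Y) →
        Nonempty (X ≅ listBiproduct l) → l.length ≤ Nat.card (X ⟶ X)) :=
  ⟨exists_isIndecomposableObj_iso_listBiproduct, fun _ _ hl ⟨e⟩ =>
    e.natCard_end_eq ▸ length_le_natCard_end_listBiproduct hl⟩
end

section
/- Let F be a field and A a unital associative F-algebra that also carries a coassociative counital F-coalgebra structure with comultiplication Δ : A → A ⊗ A and counit ε : A → F, such that Δ(1) = 1 ⊗ 1. Let β : A × A → F be a compatible pairing with β(a, 1) = ε(a) for all a ∈ A, and suppose β is anisotropic: β(x, x) ≠ 0 for every x ≠ 0. Let V = Prim(A). Then F·1 ∩ V = {0} and (F·1 + V) ∩ (Σ_{k≥2} V^k) = {0}; in particular the sum (F·1 ⊕ V) + Σ_{k≥2} V^k is direct. -/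
open TensorProduct

/-- The subspace of primitive elements of `A`: those `x` with
`Δ(x) = x ⊗ 1 + 1 ⊗ x`. -/
def PrimSubmodule (F A : Type*) [Field F] [Ring A] [Algebra F A]
    [Coalgebra F A] : Submodule F A where
  carrier := {x | Coalgebra.comul x = x ⊗ₜ[F] (1 : A) + (1 : A) ⊗ₜ[F] x}
  add_mem' := by
    intro a b ha hb
    simp only [Set.mem_setOf_eq] at *
    rw [map_add, ha, hb, TensorProduct.add_tmul, TensorProduct.tmul_add]
    abel
  zero_mem' := by simp
  smul_mem' := by
    intro c a ha
    simp only [Set.mem_setOf_eq] at *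
    rw [map_smul, ha, smul_add, TensorProduct.smul_tmul', ← TensorProduct.tmul_smul]

/-!
The counit vanishes on primitive elements, and `β(·, 1) = ε` is multiplicative because
`Δ(1) = 1 ⊗ 1`; hence `β(z, 1) = 0` for every `z ∈ V^k`, `k ≥ 1`. An element `c ∈ F·1 + V` has
`Δ(c) = c ⊗ 1 + 1 ⊗ c - ε(c) 1 ⊗ 1`, so by compatibility every term of `β(m·n, c)` with
`m ∈ V` and `n ∈ V^(k+1)` contains a factor `β(m, 1)` or `β(n, 1)`. Thus `F·1 + V` and
`Σ_{k≥2} V^k` are orthogonal for `β`, and anisotropy forces their intersection to be zero.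
-/

section Coalgebra

variable {F A : Type*} [Field F] [Ring A] [Algebra F A] [Coalgebra F A] [Nontrivial A]

theorem Coalgebra.counit_one_of_comul_one
    (hone : Coalgebra.comul (1 : A) = (1 : A) ⊗ₜ[F] (1 : A)) :
    Coalgebra.counit (R := F) (1 : A) = 1 := by
  have h := LinearMap.congr_fun (Coalgebra.lift_lsmul_comp_counit_comp_comul (R := F) (A := A)) 1
  simp only [LinearMap.comp_apply, hone, lift.tmul, LinearMap.lsmul_apply,
    LinearMap.id_apply] at h
  exact smul_left_injective F one_ne_zero (h.trans (one_smul F 1).symm)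

theorem Coalgebra.counit_algebraMap_of_comul_one
    (hone : Coalgebra.comul (1 : A) = (1 : A) ⊗ₜ[F] (1 : A)) (r : F) :
    Coalgebra.counit (algebraMap F A r) = r := by
  rw [Algebra.algebraMap_eq_smul_one, map_smul, counit_one_of_comul_one hone, smul_eq_mul,
    mul_one]

theorem counit_eq_zero_of_mem_primSubmodule
    (hone : Coalgebra.comul (1 : A) = (1 : A) ⊗ₜ[F] (1 : A)) {x : A}
    (hx : x ∈ PrimSubmodule F A) : Coalgebra.counit (R := F) x = 0 := by
  have h := LinearMap.congr_fun (Coalgebra.lift_lsmul_comp_counit_comp_comul (R := F) (A := A)) x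
  have hx' : Coalgebra.comul x = x ⊗ₜ[F] (1 : A) + (1 : A) ⊗ₜ[F] x := hx
  simp only [LinearMap.comp_apply, hx', map_add, lift.tmul, LinearMap.lsmul_apply,
    LinearMap.id_apply, Coalgebra.counit_one_of_comul_one hone, one_smul, add_eq_right] at h
  exact (smul_eq_zero.1 h).resolve_right one_ne_zero

theorem one_inf_primSubmodule_eq_bot
    (hone : Coalgebra.comul (1 : A) = (1 : A) ⊗ₜ[F] (1 : A)) :
    (1 : Submodule F A) ⊓ PrimSubmodule F A = ⊥ := by
  refine eq_bot_iff.2 fun x ⟨hx1, hxV⟩ => ?_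
  obtain ⟨r, rfl⟩ := Submodule.mem_one.1 hx1
  have hr := counit_eq_zero_of_mem_primSubmodule hone hxV
  rw [Coalgebra.counit_algebraMap_of_comul_one hone] at hr
  simp [hr]

theorem comul_of_mem_one_sup_primSubmodule
    (hone : Coalgebra.comul (1 : A) = (1 : A) ⊗ₜ[F] (1 : A)) {c : A}
    (hc : c ∈ (1 : Submodule F A) ⊔ PrimSubmodule F A) :
    Coalgebra.comul c = c ⊗ₜ[F] (1 : A) + (1 : A) ⊗ₜ[F] c -
      Coalgebra.counit (R := F) c • ((1 : A) ⊗ₜ[F] (1 : A)) := by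
  obtain ⟨y, hy, v, hv, rfl⟩ := Submodule.mem_sup.1 hc
  obtain ⟨r, rfl⟩ := Submodule.mem_one.1 hy
  have hv' : Coalgebra.comul v = v ⊗ₜ[F] (1 : A) + (1 : A) ⊗ₜ[F] v := hv
  have hcounit : Coalgebra.counit (R := F) (algebraMap F A r + v) = r := by
    rw [map_add, Coalgebra.counit_algebraMap_of_comul_one hone,
      counit_eq_zero_of_mem_primSubmodule hone hv, add_zero]
  rw [hcounit, Algebra.algebraMap_eq_smul_one, map_add, map_smul, hone, hv']
  simp only [add_tmul, tmul_add, smul_tmul', tmul_smul]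
  abel

end Coalgebra

theorem Submodule.pow_succ_le_ker_of_map_mul {R A : Type*} [CommSemiring R] [Semiring A]
    [Algebra R A] {f : A →ₗ[R] R} (hf : ∀ a b, f (a * b) = f a * f b) {W : Submodule R A}
    (hW : W ≤ LinearMap.ker f) : ∀ n : ℕ, W ^ (n + 1) ≤ LinearMap.ker f
  | 0 => by rwa [pow_one]
  | n + 1 => by
    rw [pow_succ', Submodule.mul_le]
    intro a ha b _
    simp [hf, LinearMap.mem_ker.1 (hW ha)]

section Pairing

variable {R A : Type*} [CommRing R] [Ring A] [Algebra R A] [Coalgebra R A]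
  (β : A →ₗ[R] A →ₗ[R] R)
  (hmul : ∀ a a' c : A, β (a * a') c =
    TensorProduct.lift ((LinearMap.mul R R).compl₁₂ (β a') (β a)) (Coalgebra.comul c))
include hmul

theorem pairing_mul_one_of_comul_one
    (hone : Coalgebra.comul (1 : A) = (1 : A) ⊗ₜ[R] (1 : A)) (a b : A) :
    β (a * b) 1 = β a 1 * β b 1 := by
  rw [hmul, hone, lift.tmul, LinearMap.compl₁₂_apply, LinearMap.mul_apply', mul_comm]

theorem pairing_mul_eq_zero_of_comul_eq {c : A} {t : R}
    (hc : Coalgebra.comul c = c ⊗ₜ[R] (1 : A) + (1 : A) ⊗ₜ[R] c - t • ((1 : A) ⊗ₜ[R] (1 : A)))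
    {m n : A} (hm : β m 1 = 0) (hn : β n 1 = 0) : β (m * n) c = 0 := by
  rw [hmul, hc]
  simp [hm, hn]

theorem iSup_pow_add_two_le_ker_pairing
    (hone : Coalgebra.comul (1 : A) = (1 : A) ⊗ₜ[R] (1 : A)) {W : Submodule R A}
    (hW : W ≤ LinearMap.ker (β.flip 1)) {c : A} {t : R}
    (hc : Coalgebra.comul c = c ⊗ₜ[R] (1 : A) + (1 : A) ⊗ₜ[R] c - t • ((1 : A) ⊗ₜ[R] (1 : A))) :
    ⨆ k : ℕ, W ^ (k + 2) ≤ LinearMap.ker (β.flip c) := by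
  refine iSup_le fun k => ?_
  have hpow := Submodule.pow_succ_le_ker_of_map_mul (f := β.flip 1)
    (pairing_mul_one_of_comul_one β hmul hone) hW k
  rw [pow_succ', Submodule.mul_le]
  intro m hm n hn
  exact pairing_mul_eq_zero_of_comul_eq β hmul hc (hW hm) (hpow hn)

end Pairing

theorem statement8_general (F A : Type*) [Field F] [Ring A] [Algebra F A] [Coalgebra F A]
    (hone : Coalgebra.comul (1 : A) = (1 : A) ⊗ₜ[F] (1 : A))
    (β : A →ₗ[F] A →ₗ[F] F)
    -- compatibility: `β(a·a', c) = Σ β(a, c₍₂₎)·β(a', c₍₁₎)`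
    (hmul : ∀ a a' c : A, β (a * a') c =
      TensorProduct.lift ((LinearMap.mul F F).compl₁₂ (β a') (β a))
        (Coalgebra.comul c))
    -- `β(a, 1) = ε(a)`
    (hright : ∀ a : A, β a 1 = Coalgebra.counit a)
    -- anisotropy: `β(x, x) ≠ 0` for `x ≠ 0`
    (haniso : ∀ x : A, x ≠ 0 → β x x ≠ 0) :
    (1 : Submodule F A) ⊓ PrimSubmodule F A = ⊥
    ∧ ((1 : Submodule F A) ⊔ PrimSubmodule F A) ⊓
        (⨆ k : ℕ, (PrimSubmodule F A) ^ (k + 2)) = ⊥ := by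
  rcases subsingleton_or_nontrivial A with hA | hA
  · have := Submodule.subsingleton_iff F |>.2 hA
    exact ⟨Subsingleton.elim _ _, Subsingleton.elim _ _⟩
  have hprim : PrimSubmodule F A ≤ LinearMap.ker (β.flip 1) := fun x hx => by
    simp [hright, counit_eq_zero_of_mem_primSubmodule hone hx]
  refine ⟨one_inf_primSubmodule_eq_bot hone, eq_bot_iff.2 fun x ⟨hx1, hx2⟩ => (Submodule.mem_bot F).2 ?_⟩
  by_contra hx0
  exact haniso x hx0 (iSup_pow_add_two_le_ker_pairing β hmul hone hprim
    (comul_of_mem_one_sup_primSubmodule hone hx1) hx2)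

/-- Let `A` be both a unital `F`-algebra and an `F`-coalgebra with
`Δ(1) = 1 ⊗ 1`, and let `β` be a compatible pairing with `β(a, 1) = ε(a)` which is
anisotropic. Then, with `V = Prim(A)`, one has `F·1 ∩ V = {0}` and
`(F·1 + V) ∩ (Σ_{k ≥ 2} V^k) = {0}`; in particular the sum `(F·1 ⊕ V) + Σ_{k≥2} V^k`
is direct. -/
theorem statement8 (F A : Type*) [Field F] [Ring A] [Algebra F A] [Coalgebra F A]
    (hone : Coalgebra.comul (1 : A) = (1 : A) ⊗ₜ[F] (1 : A))
    (β : A →ₗ[F] A →ₗ[F] F)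
    -- compatibility: `β(a·a', c) = Σ β(a, c₍₂₎)·β(a', c₍₁₎)`
    (hmul : ∀ a a' c : A, β (a * a') c =
      TensorProduct.lift ((LinearMap.mul F F).compl₁₂ (β a') (β a))
        (Coalgebra.comul c))
    -- `ε(c) = β(1, c)`
    (hcounit : ∀ c : A, Coalgebra.counit c = β 1 c)
    -- `β(a, 1) = ε(a)`
    (hright : ∀ a : A, β a 1 = Coalgebra.counit a)
    -- anisotropy: `β(x, x) ≠ 0` for `x ≠ 0`
    (haniso : ∀ x : A, x ≠ 0 → β x x ≠ 0) :
    (1 : Submodule F A) ⊓ PrimSubmodule F A = ⊥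
    ∧ ((1 : Submodule F A) ⊔ PrimSubmodule F A) ⊓
        (⨆ k : ℕ, (PrimSubmodule F A) ^ (k + 2)) = ⊥ :=
  statement8_general F A hone β hmul hright haniso
end

section
/- Let F be a field, R an associative unital F-algebra, and A, B left R-modules whose F-vector space structures are obtained by restriction of scalars along F → R. Suppose A and B are simple R-modules, A is finite-dimensional over F, and there is a nonzero F-bilinear pairing β : A × B → F satisfying β(r•a, b) = β(a, r•b) for all r ∈ R, a ∈ A, b ∈ B. Then A and B are isomorphic as R-modules. -/
/-!
The invariance `β (r • a) b = β a (r • b)` makes the left and right kernels of `β` submodules, so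
for simple `A` and `B` the pairing is nondegenerate on both sides. Moving `r` and `s` across the
pairing one at a time shows that `r * s` and `s * r` act identically, so `R` acts on `A` and on `B`
through a commutative quotient. For such a simple module the annihilator of any nonzero element is
the annihilator of the whole module, hence `A ≃ R ⧸ ann A` and `B ≃ R ⧸ ann B`; nondegeneracy
gives `ann A = ann B`.
-/

open LinearMap

section InvariantPairing

variable {S R A B M : Type*} [CommSemiring S] [Ring R]
  [AddCommGroup A] [Module R A] [Module S A] [AddCommGroup B] [Module R B] [Module S B]
  [AddCommMonoid M] [Module S M]

theorem LinearMap.injective_of_smul_invariant [IsSimpleModule R A] {β : A →ₗ[S] B →ₗ[S] M}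
    (hβ : β ≠ 0) (hinv : ∀ (r : R) (a : A) (b : B), β (r • a) b = β a (r • b)) :
    Function.Injective β := by
  let K : Submodule R A :=
    { carrier := {a | β a = 0}
      add_mem' := fun {x y} hx hy => by simp_all
      zero_mem' := map_zero β
      smul_mem' := fun r a ha => by ext b; simp_all }
  rcases eq_bot_or_eq_top K with hK | hK
  · refine (injective_iff_map_eq_zero β).mpr fun a ha => ?_
    simpa [hK] using (show a ∈ K from ha)
  · exact (hβ <| LinearMap.ext fun a => show a ∈ K by simp [hK]).elim

theorem LinearMap.mul_smul_eq_of_smul_invariant {β : A →ₗ[S] B →ₗ[S] M} (hβ : Function.Injective β)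
    (hinv : ∀ (r : R) (a : A) (b : B), β (r • a) b = β a (r • b)) (r s : R) (a : A) :
    (r * s) • a = (s * r) • a :=
  hβ <| LinearMap.ext fun b => by
    rw [mul_smul, hinv r, hinv s, ← mul_smul, ← hinv (s * r)]

theorem LinearMap.annihilator_le_of_smul_invariant {β : A →ₗ[S] B →ₗ[S] M} (hβ : Function.Injective β)
    (hinv : ∀ (r : R) (a : A) (b : B), β (r • a) b = β a (r • b)) :
    Module.annihilator R B ≤ Module.annihilator R A := fun r hr => by
  rw [Module.mem_annihilator] at hr ⊢
  exact fun a => hβ <| LinearMap.ext fun b => by simp [hinv, hr]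

end InvariantPairing

section CommutingAction

variable {R M N : Type*} [Ring R] [AddCommGroup M] [Module R M] [AddCommGroup N] [Module R N]

theorem ker_toSpanSingleton_eq_annihilator
    (hcomm : ∀ (r s : R) (m : M), (r * s) • m = (s * r) • m) {m : M}
    (hm : Submodule.span R {m} = ⊤) :
    ker (toSpanSingleton R M m) = Module.annihilator R M := by
  refine le_antisymm (fun r hr => Module.mem_annihilator.mpr fun x => ?_)
    fun r hr => Module.mem_annihilator.mp hr m
  obtain ⟨s, rfl⟩ := Submodule.mem_span_singleton.mp (hm ▸ Submodule.mem_top : x ∈ _)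
  rw [← mul_smul, hcomm, mul_smul, show r • m = 0 from hr, smul_zero]

theorem nonempty_linearEquiv_of_annihilator_eq [IsSimpleModule R M] [IsSimpleModule R N]
    (hcommM : ∀ (r s : R) (m : M), (r * s) • m = (s * r) • m)
    (hcommN : ∀ (r s : R) (n : N), (r * s) • n = (s * r) • n)
    (h : Module.annihilator R M = Module.annihilator R N) : Nonempty (M ≃ₗ[R] N) := by
  have := IsSimpleModule.nontrivial R M
  have := IsSimpleModule.nontrivial R N
  obtain ⟨m, hm⟩ := exists_ne (0 : M)
  obtain ⟨n, hn⟩ := exists_ne (0 : N)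
  have hker : ker (toSpanSingleton R M m) = ker (toSpanSingleton R N n) := by
    rw [ker_toSpanSingleton_eq_annihilator hcommM (IsSimpleModule.span_singleton_eq_top R hm),
      ker_toSpanSingleton_eq_annihilator hcommN (IsSimpleModule.span_singleton_eq_top R hn), h]
  exact ⟨((quotKerEquivOfSurjective _ (IsSimpleModule.toSpanSingleton_surjective R hm)).symm.trans
    (Submodule.quotEquivOfEq _ _ hker)).trans
      (quotKerEquivOfSurjective _ (IsSimpleModule.toSpanSingleton_surjective R hn))⟩

end CommutingAction

theorem statement9_general (F R A B : Type*) [Field F] [Ring R]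
    [AddCommGroup A] [Module R A] [Module F A]
    [AddCommGroup B] [Module R B] [Module F B]
    [IsSimpleModule R A] [IsSimpleModule R B]
    (β : A →ₗ[F] B →ₗ[F] F) (hβ : β ≠ 0)
    (hinv : ∀ (r : R) (a : A) (b : B), β (r • a) b = β a (r • b)) :
    Nonempty (A ≃ₗ[R] B) := by
  have hinv_flip : ∀ (r : R) (b : B) (a : A), β.flip (r • b) a = β.flip b (r • a) :=
    fun r b a => (hinv r a b).symm
  have hβ_flip : β.flip ≠ 0 := fun h => hβ <| ext₂ fun a b => congr_fun₂ h b a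
  have hA := β.injective_of_smul_invariant hβ hinv
  have hB := β.flip.injective_of_smul_invariant hβ_flip hinv_flip
  exact nonempty_linearEquiv_of_annihilator_eq (mul_smul_eq_of_smul_invariant hA hinv)
    (mul_smul_eq_of_smul_invariant hB hinv_flip)
    ((annihilator_le_of_smul_invariant hB hinv_flip).antisymm
      (annihilator_le_of_smul_invariant hA hinv))

/-- Let `R` be an associative unital `F`-algebra and `A`, `B` simple
left `R`-modules (with `F`-vector space structures obtained by restriction of scalars),
`A` finite-dimensional over `F`. If there is a nonzero `R`-invariant `F`-bilinear
pairing `β : A × B → F`, then `A ≅ B` as `R`-modules. -/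
theorem statement9 (F R A B : Type*) [Field F] [Ring R] [Algebra F R]
    [AddCommGroup A] [Module R A] [Module F A] [IsScalarTower F R A]
    [AddCommGroup B] [Module R B] [Module F B] [IsScalarTower F R B]
    [IsSimpleModule R A] [IsSimpleModule R B]
    [FiniteDimensional F A]
    (β : A →ₗ[F] B →ₗ[F] F) (hβ : β ≠ 0)
    (hinv : ∀ (r : R) (a : A) (b : B), β (r • a) b = β a (r • b)) :
    Nonempty (A ≃ₗ[R] B) :=
  statement9_general F R A B β hβ hinv
end

section
/- Let F be a field, R an associative unital F-algebra, and A, B left R-modules whose F-vector space structures are obtained by restriction of scalars along F → R. Let β : A × B → F be an F-bilinear pairing satisfying β(r•a, b) = β(a, r•b) for all r ∈ R, a ∈ A, b ∈ B, and suppose its left kernel is trivial: if a ∈ A satisfies β(a, b) = 0 for all b ∈ B, then a = 0. If B is a simple R-module, then for every nonzero a ∈ A and every r ∈ R with r•a = 0 one has r•b = 0 for all b ∈ B (i.e. the annihilator of a contains into the annihilator of B). If moreover A is also a simple R-module, then for every nonzero a ∈ A the annihilator of a in R equals the annihilator of the whole module A, i.e. for r ∈ R, r•a = 0 if and only if r•a'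 = 0 for all a' ∈ A. -/
/-- Let `R` be an associative unital `F`-algebra, `A`, `B` left
`R`-modules, and `β : A × B → F` an `R`-invariant `F`-bilinear pairing with trivial left
kernel. If `B` is simple, then for every nonzero `a ∈ A` the annihilator of `a` is
contained in the annihilator of `B`; if moreover `A` is simple, then for every nonzero
`a ∈ A` the annihilator of `a` equals the annihilator of the whole module `A`. -/
theorem statement10 (F R A B : Type*) [Field F] [Ring R] [Algebra F R]
    [AddCommGroup A] [Module R A] [Module F A] [IsScalarTower F R A]
    [AddCommGroup B] [Module R B] [Module F B] [IsScalarTower F R B]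
    (β : A →ₗ[F] B →ₗ[F] F)
    (hker : ∀ a : A, (∀ b : B, β a b = 0) → a = 0)
    (hinv : ∀ (r : R) (a : A) (b : B), β (r • a) b = β a (r • b))
    [IsSimpleModule R B] :
    (∀ a : A, a ≠ 0 → ∀ r : R, r • a = 0 → ∀ b : B, r • b = 0)
    ∧ (IsSimpleModule R A →
        ∀ a : A, a ≠ 0 → ∀ r : R, (r • a = 0 ↔ ∀ a' : A, r • a' = 0)) := by
  have main : ∀ a : A, a ≠ 0 → ∀ r : R, r • a = 0 → ∀ b : B, r • b = 0 := by
    intro a ha r hra b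
    by_contra hb
    -- the submodule generated by `r • b` is all of `B`
    have hspan : Submodule.span R {r • b} = ⊤ := by
      rcases eq_bot_or_eq_top (Submodule.span R {r • b}) with h | h
      · exfalso
        exact hb (by simpa using (Submodule.span_eq_bot.mp h) (r • b) rfl)
      · exact h
    -- then β a vanishes on all of B, so a = 0
    apply ha
    apply hker
    intro b'
    have hb' : b' ∈ Submodule.span R ({r • b} : Set B) := hspan ▸ Submodule.mem_top
    obtain ⟨s, rfl⟩ := Submodule.mem_span_singleton.mp hb'
    have : β a (s • r • b) = β ((s * r) • a) b := by
      rw [hinv, mul_smul]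
    rw [this, mul_smul, hra, smul_zero]
    simp
  refine ⟨main, fun _ a ha r => ⟨fun hra a' => ?_, fun h => h a⟩⟩
  by_contra hra'
  -- a' ≠ 0 since r • a' ≠ 0
  have ha' : a' ≠ 0 := by rintro rfl; exact hra' (smul_zero r)
  -- β (r • a') b = β a' (r • b) = 0 for all b, so r • a' = 0
  apply hra'
  apply hker
  intro b
  rw [hinv, main a ha r hra b]
  simp
end

section
/- Let F be a field, Γ a commutative additive monoid with bounded decompositions, and C an F-coalgebra with comultiplication Δ and counit ε, graded by Γ (so C = ⊕_{γ∈Γ} C_γ as an internal direct sum of subspaces) with Δ respecting the grading, i.e. Δ(C_γ) ⊆ Σ_{α+β=γ} C_α ⊗ C_β for every γ. Let D ⊆ C be a graded subcoalgebra: D = ⊕_γ (D ∩ C_γ), and Δ(D) is contained in the image of D ⊗ D in C ⊗ C. If D ∩ C_0 = {0}, then D = {0}. -/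
/-!
Let `x` be an element of `D` of degree `γ ≠ 0`. The counit identity `x = ∑ ε(x₁) x₂` holds in
degree `γ`, and there only the summands with `x₂` of degree `γ` survive; their partners `x₁`
have a degree `α` with `α + γ = γ`, which bounded decompositions force to be `0`. Hence `x` is
recovered from `Δ x` through the degree-`0` projection of the left tensor factor. Since `D` is
graded and `D ∩ C₀ = 0`, that projection kills `D`, and `Δ x ∈ D ⊗ D`, so `x = 0`.
-/

open TensorProduct DirectSum

theorem eq_zero_of_add_eq_self_of_boundedDecomp {Γ : Type*} [AddMonoid Γ] {α γ : Γ}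
    (hbdd : ∃ h : ℕ, ∀ l : List Γ, (∀ x ∈ l, x ≠ 0) → l.sum = γ → l.length ≤ h)
    (hγ : γ ≠ 0) (hαγ : α + γ = γ) : α = 0 := by
  by_contra hα
  obtain ⟨h, hh⟩ := hbdd
  have hnsmul : ∀ n : ℕ, n • α + γ = γ := by
    intro n
    induction n with
    | zero => simp
    | succ n ih => rw [succ_nsmul, add_assoc, hαγ, ih]
  have hlen := hh (List.replicate (h + 1) α ++ [γ])
    (by simp only [List.mem_append, List.mem_replicate, List.mem_singleton]; grind)
    (by simp [List.sum_replicate, hnsmul])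
  simp at hlen

section GradedProjection

variable {ι R M : Type*} [DecidableEq ι] [Semiring R] [AddCommMonoid M] [Module R M]
  (ℳ : ι → Submodule R M) [Decomposition ℳ]

def gradedProj (i : ι) : M →ₗ[R] M :=
  (ℳ i).subtype ∘ₗ component R ι (fun i => ℳ i) i ∘ₗ (decomposeLinearEquiv ℳ).toLinearMap

variable {ℳ}

theorem gradedProj_apply (i : ι) (x : M) : gradedProj ℳ i x = decompose ℳ x i := rfl

theorem gradedProj_of_mem {i : ι} {x : M} (hx : x ∈ ℳ i) : gradedProj ℳ i x = x :=
  decompose_of_mem_same ℳ hx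

theorem gradedProj_of_mem_ne {i j : ι} {x : M} (hx : x ∈ ℳ i) (hij : i ≠ j) :
    gradedProj ℳ j x = 0 := by
  rw [gradedProj_apply, decompose_of_mem_ne ℳ hx hij]

theorem le_ker_gradedProj_of_inf_eq_bot {N : Submodule R M} (hN : N = ⨆ i, N ⊓ ℳ i) {j : ι}
    (hj : N ⊓ ℳ j = ⊥) : N ≤ LinearMap.ker (gradedProj ℳ j) := by
  rw [hN]
  refine iSup_le fun i x hx => LinearMap.mem_ker.2 ?_
  rcases eq_or_ne i j with rfl | hij
  · rw [hj, Submodule.mem_bot] at hx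
    rw [hx, map_zero]
  · exact gradedProj_of_mem_ne hx.2 hij

end GradedProjection

theorem LinearMap.rTensor_eq_zero_of_mem_map₂ {R M N P : Type*} [CommSemiring R]
    [AddCommMonoid M] [AddCommMonoid N] [AddCommMonoid P] [Module R M] [Module R N] [Module R P]
    {f : M →ₗ[R] N} {p : Submodule R M} (hf : p ≤ LinearMap.ker f) (q : Submodule R P)
    {t : M ⊗[R] P} (ht : t ∈ Submodule.map₂ (TensorProduct.mk R M P) p q) :
    f.rTensor P t = 0 := by
  refine LinearMap.mem_ker.1 (Submodule.map₂_le.2 (fun a ha b _ => ?_) ht)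
  rw [LinearMap.mem_ker, mk_apply, rTensor_tmul, LinearMap.mem_ker.1 (hf ha), zero_tmul]

theorem gradedProj_lid_rTensor_counit_gradedProj_zero_comul {R C Γ : Type*} [CommSemiring R]
    [AddCommMonoid C] [Module R C] [Coalgebra R C] [AddMonoid Γ] [DecidableEq Γ]
    {𝒞 : Γ → Submodule R C} [Decomposition 𝒞] {γ : Γ} (hγ : ∀ α, α + γ = γ → α = 0)
    {x : C} (hx : x ∈ 𝒞 γ)
    (hΔ : Coalgebra.comul x ∈ ⨆ p : {p : Γ × Γ // p.1 + p.2 = γ},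
      Submodule.map₂ (TensorProduct.mk R C C) (𝒞 (p : Γ × Γ).1) (𝒞 (p : Γ × Γ).2)) :
    gradedProj 𝒞 γ (TensorProduct.lid R C
      ((Coalgebra.counit ∘ₗ gradedProj 𝒞 0).rTensor C (Coalgebra.comul x))) = x := by
  let φ : R ⊗[R] C →ₗ[R] C := gradedProj 𝒞 γ ∘ₗ (TensorProduct.lid R C).toLinearMap
  have hagree : (⨆ p : {p : Γ × Γ // p.1 + p.2 = γ},
      Submodule.map₂ (TensorProduct.mk R C C) (𝒞 (p : Γ × Γ).1) (𝒞 (p : Γ × Γ).2)) ≤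
      LinearMap.eqLocus (φ ∘ₗ Coalgebra.counit.rTensor C)
        (φ ∘ₗ (Coalgebra.counit ∘ₗ gradedProj 𝒞 0).rTensor C) := by
    refine iSup_le fun ⟨⟨α, β⟩, hαβ⟩ => Submodule.map₂_le.2 fun a ha b hb => ?_
    simp only [LinearMap.mem_eqLocus, φ, LinearMap.comp_apply, mk_apply, LinearMap.rTensor_tmul,
      LinearEquiv.coe_coe, lid_tmul, map_smul]
    rcases eq_or_ne β γ with rfl | hβγ
    · obtain rfl := hγ α hαβ
      rw [gradedProj_of_mem ha]
    · rw [gradedProj_of_mem_ne hb hβγ, smul_zero, smul_zero]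
  calc _ = φ (Coalgebra.counit.rTensor C (Coalgebra.comul x)) := (hagree hΔ).symm
    _ = x := by
      simp [φ, Coalgebra.rTensor_counit_comul, gradedProj_of_mem hx]

/-- Let `Γ` be a commutative additive monoid with bounded
decompositions and `C` an `F`-coalgebra graded by `Γ`, with `Δ` respecting the grading.
If `D ⊆ C` is a graded subcoalgebra with `D ∩ C_0 = {0}`, then `D = {0}`. -/
theorem statement12 (F : Type*) [Field F]
    (Γ : Type*) [AddCommMonoid Γ] [DecidableEq Γ]
    -- `Γ` has bounded decompositions
    (hbdd : ∀ γ : Γ, γ ≠ 0 → ∃ h : ℕ, ∀ l : List Γ,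
      (∀ x ∈ l, x ≠ 0) → l.sum = γ → l.length ≤ h)
    (C : Type*) [AddCommGroup C] [Module F C] [Coalgebra F C]
    (𝒞 : Γ → Submodule F C)
    (hinternal : DirectSum.IsInternal 𝒞)
    -- `Δ` respects the grading
    (hΔ : ∀ γ : Γ, ∀ x ∈ 𝒞 γ, Coalgebra.comul x ∈
      ⨆ p : {p : Γ × Γ // p.1 + p.2 = γ},
        Submodule.map₂ (TensorProduct.mk F C C) (𝒞 (p : Γ × Γ).1) (𝒞 (p : Γ × Γ).2))
    (D : Submodule F C)
    -- `D` is graded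
    (hgraded : D = ⨆ γ : Γ, D ⊓ 𝒞 γ)
    -- `D` is a subcoalgebra: `Δ(D)` lies in the image of `D ⊗ D` in `C ⊗ C`
    (hsub : ∀ x ∈ D, Coalgebra.comul x ∈ Submodule.map₂ (TensorProduct.mk F C C) D D)
    (hD0 : D ⊓ 𝒞 0 = ⊥) :
    D = ⊥ := by
  let _ : Decomposition 𝒞 := hinternal.chooseDecomposition
  have hcounit : D ≤ LinearMap.ker (Coalgebra.counit ∘ₗ gradedProj 𝒞 0) :=
    (le_ker_gradedProj_of_inf_eq_bot hgraded hD0).trans (LinearMap.ker_le_ker_comp _ _)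
  suffices hpiece : ∀ γ, D ⊓ 𝒞 γ = ⊥ by
    rw [hgraded, iSup_congr hpiece, iSup_bot]
  intro γ
  rcases eq_or_ne γ 0 with rfl | hγ
  · exact hD0
  refine eq_bot_iff.2 fun x ⟨hxD, hxγ⟩ => ?_
  have hunit α : α + γ = γ → α = 0 := eq_zero_of_add_eq_self_of_boundedDecomp (hbdd γ hγ) hγ
  rw [Submodule.mem_bot, ← gradedProj_lid_rTensor_counit_gradedProj_zero_comul hunit hxγ
    (hΔ γ x hxγ), LinearMap.rTensor_eq_zero_of_mem_map₂ hcounit D (hsub x hxD), map_zero,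
    map_zero]
end

section
/- Let F be a field and U an F-vector space equipped with a bilinear form β : U × U → F such that β(u, u) ≠ 0 for every u ≠ 0. Let (U_i)_{i∈ℕ} be a family of subspaces of U such that β(U_j, U_i) = 0 whenever j > i (i.e. β(x, y) = 0 for all x ∈ U_j, y ∈ U_i). Then the family (U_i)_{i∈ℕ} is independent: the sum Σ_i U_i is direct. -/
/-- Let `U` be an `F`-vector space with a bilinear form `β` such that
`β(u, u) ≠ 0` for every `u ≠ 0`, and let `(U_i)_{i ∈ ℕ}` be subspaces of `U` with
`β(U_j, U_i) = 0` whenever `j > i`. Then the family `(U_i)` is independent: the sum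
`Σ_i U_i` is direct. -/
theorem statement13 (F U : Type*) [Field F] [AddCommGroup U] [Module F U]
    (β : U →ₗ[F] U →ₗ[F] F)
    (haniso : ∀ u : U, u ≠ 0 → β u u ≠ 0)
    (Us : ℕ → Submodule F U)
    (horth : ∀ i j : ℕ, i < j → ∀ x ∈ Us j, ∀ y ∈ Us i, β x y = 0) :
    iSupIndep Us := by
  classical
  apply iSupIndep_of_dfinsupp_lsum_injective
  rw [← LinearMap.ker_eq_bot, LinearMap.ker_eq_bot']
  intro v hv
  by_contra hne
  have hsupp : v.support.Nonempty := by
    rw [Finset.nonempty_iff_ne_empty]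
    intro h
    exact hne (DFinsupp.support_eq_empty.mp h)
  set m := v.support.max' hsupp with hm
  have hmem : m ∈ v.support := v.support.max'_mem hsupp
  have hvm : (v m : U) ≠ 0 := by
    intro h
    exact DFinsupp.mem_support_iff.mp hmem (Subtype.ext h)
  have hsum : (DFinsupp.lsum ℕ (M := fun i ↦ ↥(Us i)) fun i => (Us i).subtype) v
      = ∑ j ∈ v.support, (v j : U) := by
    simp [DFinsupp.lsum_apply_apply, DFinsupp.sumAddHom_apply, DFinsupp.sum]
  have h0 : β (v m) (∑ j ∈ v.support, (v j : U)) = 0 := by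
    rw [← hsum, hv]; simp
  rw [map_sum] at h0
  rw [Finset.sum_eq_single m] at h0
  · exact haniso _ hvm h0
  · intro j hj hjm
    have hjlt : j < m := lt_of_le_of_ne (v.support.le_max' j hj) hjm
    exact horth j m hjlt _ (v m).2 _ (v j).2
  · intro h; exact absurd hmem h
end

section
/- Let F be a field and A a unital associative F-algebra carrying a coassociative counital F-coalgebra structure with comultiplication Δ and counit ε, such that Δ(1) = 1 ⊗ 1. Let β : A × A → F be a compatible pairing with β(a, 1) = ε(a) for all a ∈ A and β(x, x) ≠ 0 for all x ≠ 0. Let V = Prim(A), and suppose that for every k ≥ 0, Δ(V^k) ⊆ Σ_{i=0}^{k} V^{k-i} ⊗ V^{i} (viewed as subspaces of A ⊗ A, with V^0 = F·1). Then β(V^ℓ, V^k) = 0 for all 0 ≤ k < ℓ, and the family of subspaces (V^k)_{k≥0} is independent, i.e. the sum Σ_{k≥0} V^k is direct. -/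
/-
The pairing sends `V^ℓ × V^k` to zero for `k < ℓ` by induction on `ℓ`: writing an element of
`V^ℓ` as a sum of products `m·v` with `m ∈ V^{ℓ-1}`, `v ∈ V`, compatibility gives
`β(m·v, c) = Σ β(v, c₍₁₎) β(m, c₍₂₎)`, and for `c ∈ V^k` every term of `Δ(c)` lies in some
`V^{k-i} ⊗ V^i`; it is killed by `β(m, V^i) = 0` when `i < ℓ - 1`, and otherwise `c₍₁₎` is a
scalar and `β(v, 1) = ε(v) = 0`, the counit axiom applied to `Δ(v) = v ⊗ 1 + 1 ⊗ v` and to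
`Δ(1) = 1 ⊗ 1` forcing `ε(v) = 0`. Independence then follows from anisotropy: in a vanishing sum
of homogeneous components, pairing the component of largest degree with the sum leaves only
its own square.
-/

open TensorProduct

theorem counit_eq_zero_of_primitive {R A : Type*} [CommSemiring R] [Ring A]
    [Algebra R A] [Coalgebra R A] (hone : Coalgebra.comul (1 : A) = (1 : A) ⊗ₜ[R] (1 : A)) {x : A}
    (hx : Coalgebra.comul x = x ⊗ₜ[R] (1 : A) + (1 : A) ⊗ₜ[R] x) :
    Coalgebra.counit (R := R) x = 0 := by
  have counit_law (a : A) :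
      TensorProduct.lid R A (LinearMap.rTensor A Coalgebra.counit (Coalgebra.comul a)) = a := by
    rw [Coalgebra.rTensor_counit_comul, lid_tmul, one_smul]
  have hone_smul : Coalgebra.counit (R := R) (1 : A) • (1 : A) = 1 := by
    simpa only [hone, LinearMap.rTensor_tmul, lid_tmul] using counit_law 1
  have hunit_smul : Coalgebra.counit (R := R) (1 : A) • x = x := by
    rw [← smul_one_mul, hone_smul, one_mul]
  have hx_smul : Coalgebra.counit (R := R) x • (1 : A) = 0 := by
    simpa only [hx, map_add, LinearMap.rTensor_tmul, lid_tmul, hunit_smul, add_eq_right]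
      using counit_law x
  calc Coalgebra.counit (R := R) x
      = Coalgebra.counit (R := R) (Coalgebra.counit (R := R) (1 : A) • x) := by rw [hunit_smul]
    _ = Coalgebra.counit (R := R) (Coalgebra.counit (R := R) x • (1 : A)) := by
        rw [map_smul, map_smul, smul_eq_mul, smul_eq_mul, mul_comm]
    _ = 0 := by rw [hx_smul, map_zero]

theorem TensorProduct.lift_eq_zero_of_mem_iSup_map₂ {R M N P ι : Type*} [CommSemiring R]
    [AddCommMonoid M] [AddCommMonoid N] [AddCommMonoid P] [Module R M] [Module R N] [Module R P]
    {S : ι → Submodule R M} {T : ι → Submodule R N} (f : M →ₗ[R] N →ₗ[R] P)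
    (hf : ∀ i, ∀ m ∈ S i, ∀ n ∈ T i, f m n = 0) {t : M ⊗[R] N}
    (ht : t ∈ ⨆ i, Submodule.map₂ (TensorProduct.mk R M N) (S i) (T i)) :
    lift f t = 0 :=
  (iSup_le fun i => Submodule.map₂_le.mpr fun m hm n hn => by
    simpa using hf i m hm n hn : _ ≤ LinearMap.ker (lift f)) ht

theorem pairing_pow_eq_zero_of_lt {R A : Type*} [CommSemiring R] [Semiring A] [Algebra R A]
    [CoalgebraStruct R A] (β : A →ₗ[R] A →ₗ[R] R) (V : Submodule R A)
    (hmul : ∀ a a' c : A, β (a * a') c =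
      lift ((LinearMap.mul R R).compl₁₂ (β a') (β a)) (Coalgebra.comul c))
    (hV : ∀ v ∈ V, β v 1 = 0)
    (hΔ : ∀ k : ℕ, ∀ x ∈ V ^ k, Coalgebra.comul x ∈
      ⨆ i : Fin (k + 1), Submodule.map₂ (TensorProduct.mk R A A) (V ^ (k - (i : ℕ))) (V ^ (i : ℕ)))
    {k l : ℕ} (hkl : k < l) {x y : A} (hx : x ∈ V ^ l) (hy : y ∈ V ^ k) :
    β x y = 0 := by
  induction l generalizing k x y with
  | zero => omega
  | succ n ih =>
    rw [pow_succ] at hx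
    refine Submodule.mul_induction_on hx (fun m hm v hv => ?_)
      (fun a b ha hb => by rw [map_add, LinearMap.add_apply, ha, hb, add_zero])
    rw [hmul]
    refine lift_eq_zero_of_mem_iSup_map₂ _ (fun i p hp q hq => ?_) (hΔ k y hy)
    rw [LinearMap.compl₁₂_apply, LinearMap.mul_apply']
    rcases lt_or_ge (i : ℕ) n with hin | hni
    · rw [ih hin hm hq, mul_zero]
    · obtain ⟨r, rfl⟩ : ∃ r, algebraMap R A r = p := by
        rwa [Nat.sub_eq_zero_of_le (by omega), pow_zero, Submodule.mem_one] at hp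
      rw [Algebra.algebraMap_eq_smul_one, map_smul, hV v hv, smul_zero, zero_mul]

theorem eq_zero_of_sum_eq_zero_of_pairing_triangular {R M ι : Type*} [CommSemiring R]
    [AddCommMonoid M] [Module R M] [LinearOrder ι] (β : M →ₗ[R] M →ₗ[R] R)
    (haniso : ∀ x : M, x ≠ 0 → β x x ≠ 0) {p : ι → Submodule R M}
    (htri : ∀ j i, j < i → ∀ x ∈ p i, ∀ y ∈ p j, β x y = 0)
    (s : Finset ι) {x : ι → M} (hx : ∀ i ∈ s, x i ∈ p i) (hsum : ∑ i ∈ s, x i = 0) :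
    ∀ i ∈ s, x i = 0 := by
  classical
  induction s using Finset.induction_on_max with
  | empty => simp
  | insert m s hlt ih =>
    have hm_notMem : m ∉ s := fun hm => lt_irrefl m (hlt m hm)
    rw [Finset.sum_insert hm_notMem] at hsum
    have hxm : x m = 0 := by
      by_contra hne
      apply haniso _ hne
      have hpair := congrArg (β (x m)) hsum
      rwa [map_add, map_sum, Finset.sum_eq_zero (fun j hj =>
          htri j m (hlt j hj) _ (hx m (s.mem_insert_self m)) _ (hx j (s.mem_insert_of_mem hj))),
        add_zero, map_zero] at hpair
    rw [hxm, zero_add] at hsum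
    intro i hi
    rcases Finset.mem_insert.mp hi with rfl | hi
    · exact hxm
    · exact ih (fun j hj => hx j (s.mem_insert_of_mem hj)) hsum i hi

theorem iSupIndep_of_pairing_triangular {R M ι : Type*} [CommRing R]
    [AddCommGroup M] [Module R M] [LinearOrder ι] (β : M →ₗ[R] M →ₗ[R] R)
    (haniso : ∀ x : M, x ≠ 0 → β x x ≠ 0) {p : ι → Submodule R M}
    (htri : ∀ j i, j < i → ∀ x ∈ p i, ∀ y ∈ p j, β x y = 0) :
    iSupIndep p := by
  classical
  refine iSupIndep_of_dfinsupp_lsum_injective p ((injective_iff_map_eq_zero _).mpr fun w hw => ?_)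
  rw [DFinsupp.lsum_apply_apply, DFinsupp.sumAddHom_apply] at hw
  ext i
  by_cases hi : i ∈ w.support
  · exact eq_zero_of_sum_eq_zero_of_pairing_triangular β haniso htri w.support
      (fun j _ => (w j).2) hw i hi
  · simpa using hi

theorem statement14_general (F A : Type*) [Field F] [Ring A] [Algebra F A] [Coalgebra F A]
    (hone : Coalgebra.comul (1 : A) = (1 : A) ⊗ₜ[F] (1 : A))
    (β : A →ₗ[F] A →ₗ[F] F)
    -- compatibility: `β(a·a', c) = Σ β(a, c₍₂₎)·β(a', c₍₁₎)`
    (hmul : ∀ a a' c : A, β (a * a') c =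
      TensorProduct.lift ((LinearMap.mul F F).compl₁₂ (β a') (β a))
        (Coalgebra.comul c))
    -- `β(a, 1) = ε(a)`
    (hright : ∀ a : A, β a 1 = Coalgebra.counit a)
    -- anisotropy
    (haniso : ∀ x : A, x ≠ 0 → β x x ≠ 0)
    -- `Δ(V^k) ⊆ Σ_{i=0}^{k} V^{k-i} ⊗ V^i`
    (hΔpow : ∀ k : ℕ, ∀ x ∈ (PrimSubmodule F A) ^ k, Coalgebra.comul x ∈
      ⨆ i : Fin (k + 1),
        Submodule.map₂ (TensorProduct.mk F A A)
          ((PrimSubmodule F A) ^ (k - (i : ℕ))) ((PrimSubmodule F A) ^ (i : ℕ))) :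
    (∀ k l : ℕ, k < l →
      ∀ x ∈ (PrimSubmodule F A) ^ l, ∀ y ∈ (PrimSubmodule F A) ^ k, β x y = 0)
    ∧ iSupIndep (fun k : ℕ => (PrimSubmodule F A) ^ k) := by
  have hV : ∀ v ∈ PrimSubmodule F A, β v 1 = 0 := fun v hv => by
    rw [hright]
    exact counit_eq_zero_of_primitive hone hv
  have hortho : ∀ k l : ℕ, k < l →
      ∀ x ∈ (PrimSubmodule F A) ^ l, ∀ y ∈ (PrimSubmodule F A) ^ k, β x y = 0 :=
    fun _ _ hkl _ hx _ hy => pairing_pow_eq_zero_of_lt β _ hmul hV hΔpow hkl hx hy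
  exact ⟨hortho, iSupIndep_of_pairing_triangular β haniso hortho⟩

/-- Let `A` be a unital `F`-algebra and `F`-coalgebra with
`Δ(1) = 1 ⊗ 1`, `β` a compatible anisotropic pairing with `β(a, 1) = ε(a)`, and
`V = Prim(A)`. If `Δ(V^k) ⊆ Σ_{i=0}^{k} V^{k-i} ⊗ V^i` for every `k`, then
`β(V^ℓ, V^k) = 0` for all `0 ≤ k < ℓ` and the sum `Σ_{k ≥ 0} V^k` is direct. -/
theorem statement14 (F A : Type*) [Field F] [Ring A] [Algebra F A] [Coalgebra F A]
    (hone : Coalgebra.comul (1 : A) = (1 : A) ⊗ₜ[F] (1 : A))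
    (β : A →ₗ[F] A →ₗ[F] F)
    -- compatibility: `β(a·a', c) = Σ β(a, c₍₂₎)·β(a', c₍₁₎)`
    (hmul : ∀ a a' c : A, β (a * a') c =
      TensorProduct.lift ((LinearMap.mul F F).compl₁₂ (β a') (β a))
        (Coalgebra.comul c))
    -- `ε(c) = β(1, c)`
    (hcounit : ∀ c : A, Coalgebra.counit c = β 1 c)
    -- `β(a, 1) = ε(a)`
    (hright : ∀ a : A, β a 1 = Coalgebra.counit a)
    -- anisotropy
    (haniso : ∀ x : A, x ≠ 0 → β x x ≠ 0)
    -- `Δ(V^k) ⊆ Σ_{i=0}^{k} V^{k-i} ⊗ V^i`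
    (hΔpow : ∀ k : ℕ, ∀ x ∈ (PrimSubmodule F A) ^ k, Coalgebra.comul x ∈
      ⨆ i : Fin (k + 1),
        Submodule.map₂ (TensorProduct.mk F A A)
          ((PrimSubmodule F A) ^ (k - (i : ℕ))) ((PrimSubmodule F A) ^ (i : ℕ))) :
    (∀ k l : ℕ, k < l →
      ∀ x ∈ (PrimSubmodule F A) ^ l, ∀ y ∈ (PrimSubmodule F A) ^ k, β x y = 0)
    ∧ iSupIndep (fun k : ℕ => (PrimSubmodule F A) ^ k) :=
  statement14_general F A hone β hmul hright haniso hΔpow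
end

section
/- Let F be a field and Γ a commutative additive monoid with bounded decompositions. Let C be an F-coalgebra with comultiplication Δ and counit ε, graded by Γ (C = ⊕_{γ∈Γ} C_γ as an internal direct sum of subspaces) with Δ respecting the grading (Δ(C_γ) ⊆ Σ_{α+β=γ} C_α ⊗ C_β for every γ). Suppose there is an element g ∈ C with C_0 = F·g and Δ(g) = g ⊗ g. Then every nonzero coideal I of C (i.e. every nonzero subspace I with Δ(I) ⊆ C ⊗ I + I ⊗ C) contains a nonzero element x satisfying Δ(x) = x ⊗ g + g ⊗ x − ε(x)·(g ⊗ g). -/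
/-!
Let `d γ` be the largest number of nonzero summands in a decomposition of `γ` and filter `C` by
`Fₙ = ⊕_{d γ ≤ n} C_γ`. As `d` is superadditive and vanishes only at `0`,
`Δ Fₙ ⊆ g ⊗ C + C ⊗ g + Fₙ₋₁ ⊗ Fₙ₋₁`. Take `x ≠ 0` in `I ∩ Fₙ` with `n` minimal, so that
`I ∩ Fₙ₋₁ ⊆ F g`. Modulo `J = I + F g`, `Δ x` vanishes because `I` is a coideal, while
`Fₙ₋₁ ⊗ Fₙ₋₁` maps injectively once `F g` is split off; hence `Δ x = g ⊗ a + b ⊗ g`, and the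
counit axioms force `Δ x = x ⊗ g + g ⊗ x - ε x • g ⊗ g`.
-/

open TensorProduct

section BoundedDecompositions

variable {Γ : Type*} [AddCommMonoid Γ]

variable (Γ) in
def HasBoundedDecompositions : Prop :=
  ∀ γ : Γ, γ ≠ 0 → ∃ h : ℕ, ∀ l : List Γ, (∀ x ∈ l, x ≠ 0) → l.sum = γ → l.length ≤ h

def decompositionLengths (γ : Γ) : Set ℕ :=
  {k | ∃ l : List Γ, (∀ x ∈ l, x ≠ 0) ∧ l.sum = γ ∧ l.length = k}

noncomputable def decompositionHeight (γ : Γ) : ℕ :=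
  sSup (decompositionLengths γ)

theorem decompositionLengths_nonempty (γ : Γ) : (decompositionLengths γ).Nonempty := by
  by_cases hγ : γ = 0
  · exact ⟨0, [], by simp, by simp [hγ], rfl⟩
  · exact ⟨1, [γ], by simpa using hγ, by simp, rfl⟩

namespace HasBoundedDecompositions

/-- If `a + b = 0` with `a ≠ 0`, then `a = a + n • (a + b)` has arbitrarily long decompositions. -/
theorem eq_zero_of_add_eq_zero (hΓ : HasBoundedDecompositions Γ) {a b : Γ} (hab : a + b = 0) :
    a = 0 := by
  by_contra ha
  have hb : b ≠ 0 := by rintro rfl; exact ha (by simpa using hab)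
  obtain ⟨h, hh⟩ := hΓ a ha
  have hlen := hh (a :: (List.replicate (h + 1) a ++ List.replicate (h + 1) b)) (by
      intro x hx
      simp only [List.mem_cons, List.mem_append, List.mem_replicate] at hx
      rcases hx with rfl | ⟨_, rfl⟩ | ⟨_, rfl⟩ <;> assumption) (by
      simp only [List.sum_cons, List.sum_append, List.sum_replicate]
      rw [← smul_add, hab, smul_zero, add_zero])
  simp only [List.length_cons, List.length_append, List.length_replicate] at hlen
  omega

theorem decompositionLengths_zero (hΓ : HasBoundedDecompositions Γ) :
    decompositionLengths (0 : Γ) = {0} := by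
  ext k
  constructor
  · rintro ⟨_ | ⟨a, l⟩, hne, hsum, rfl⟩
    · rfl
    · exact absurd (hΓ.eq_zero_of_add_eq_zero (by simpa using hsum)) (hne a (by simp))
  · rintro rfl
    exact ⟨[], by simp, by simp, rfl⟩

theorem bddAbove_decompositionLengths (hΓ : HasBoundedDecompositions Γ) (γ : Γ) :
    BddAbove (decompositionLengths γ) := by
  by_cases hγ : γ = 0
  · rw [hγ, hΓ.decompositionLengths_zero]
    exact bddAbove_singleton
  · obtain ⟨h, hh⟩ := hΓ γ hγ
    exact ⟨h, by rintro k ⟨l, hne, hsum, rfl⟩; exact hh l hne hsum⟩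

theorem decompositionHeight_zero (hΓ : HasBoundedDecompositions Γ) :
    decompositionHeight (0 : Γ) = 0 := by
  rw [decompositionHeight, hΓ.decompositionLengths_zero, csSup_singleton]

theorem one_le_decompositionHeight (hΓ : HasBoundedDecompositions Γ) {γ : Γ} (hγ : γ ≠ 0) :
    1 ≤ decompositionHeight γ :=
  le_csSup (hΓ.bddAbove_decompositionLengths γ) ⟨[γ], by simpa using hγ, by simp, rfl⟩

theorem decompositionHeight_add_le (hΓ : HasBoundedDecompositions Γ) (a b : Γ) :
    decompositionHeight a + decompositionHeight b ≤ decompositionHeight (a + b) := by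
  obtain ⟨la, hla, rfl, hlena⟩ :=
    Nat.sSup_mem (decompositionLengths_nonempty a) (hΓ.bddAbove_decompositionLengths a)
  obtain ⟨lb, hlb, rfl, hlenb⟩ :=
    Nat.sSup_mem (decompositionLengths_nonempty b) (hΓ.bddAbove_decompositionLengths b)
  refine le_csSup (hΓ.bddAbove_decompositionLengths _) ⟨la ++ lb, ?_, by simp, ?_⟩
  · simpa [or_imp, forall_and] using And.intro hla hlb
  · simp [decompositionHeight, hlena, hlenb]

end HasBoundedDecompositions

end BoundedDecompositions

section GradedFiltration

variable {R C Γ : Type*} [CommSemiring R] [AddCommMonoid C] [Module R C] [AddCommMonoid Γ]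

noncomputable def gradedFiltration (𝒞 : Γ → Submodule R C) (n : ℕ) : Submodule R C :=
  ⨆ (γ : Γ) (_ : decompositionHeight γ ≤ n), 𝒞 γ

theorem le_gradedFiltration (𝒞 : Γ → Submodule R C) {γ : Γ} {n : ℕ}
    (hγ : decompositionHeight γ ≤ n) : 𝒞 γ ≤ gradedFiltration 𝒞 n :=
  le_iSup₂ (f := fun γ (_ : decompositionHeight γ ≤ n) => 𝒞 γ) γ hγ

theorem monotone_gradedFiltration (𝒞 : Γ → Submodule R C) : Monotone (gradedFiltration 𝒞) :=
  fun _ _ hmn => iSup₂_le fun _ hγ => le_gradedFiltration 𝒞 (hγ.trans hmn)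

theorem iSup_gradedFiltration {𝒞 : Γ → Submodule R C} (h𝒞 : ⨆ γ, 𝒞 γ = ⊤) :
    ⨆ n, gradedFiltration 𝒞 n = ⊤ :=
  top_unique <| h𝒞 ▸ iSup_le fun γ =>
    (le_gradedFiltration 𝒞 le_rfl).trans (le_iSup _ (decompositionHeight γ))

theorem gradedFiltration_zero (hΓ : HasBoundedDecompositions Γ) (𝒞 : Γ → Submodule R C) :
    gradedFiltration 𝒞 0 = 𝒞 0 := by
  refine le_antisymm (iSup₂_le fun γ hγ => ?_)
    (le_gradedFiltration 𝒞 hΓ.decompositionHeight_zero.le)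
  obtain rfl : γ = 0 := by
    by_contra hγ0
    have := hΓ.one_le_decompositionHeight hγ0
    omega
  exact le_rfl

theorem comul_mem_gradedFiltration [Coalgebra R C] (hΓ : HasBoundedDecompositions Γ)
    {𝒞 : Γ → Submodule R C}
    (hΔ : ∀ γ : Γ, ∀ x ∈ 𝒞 γ, Coalgebra.comul x ∈
      ⨆ p : {p : Γ × Γ // p.1 + p.2 = γ}, Submodule.map₂ (mk R C C) (𝒞 p.1.1) (𝒞 p.1.2))
    {n : ℕ} {x : C} (hx : x ∈ gradedFiltration 𝒞 n) :
    Coalgebra.comul x ∈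
      Submodule.map₂ (mk R C C) (𝒞 0) ⊤ ⊔ Submodule.map₂ (mk R C C) ⊤ (𝒞 0) ⊔
        Submodule.map₂ (mk R C C) (gradedFiltration 𝒞 (n - 1)) (gradedFiltration 𝒞 (n - 1)) := by
  refine Submodule.mem_comap.mp ((iSup₂_le fun γ hγ y hy => ?_ :
    gradedFiltration 𝒞 n ≤ Submodule.comap (Coalgebra.comul (R := R) (A := C)) _) hx)
  refine Submodule.mem_comap.mpr (SetLike.le_def.mp (iSup_le fun p => ?_) (hΔ γ y hy))
  obtain ⟨⟨α, β⟩, hαβ : α + β = γ⟩ := p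
  change Submodule.map₂ _ (𝒞 α) (𝒞 β) ≤ _
  by_cases hα : α = 0
  · subst hα
    exact (Submodule.map₂_le_map₂_right le_top).trans (le_sup_left.trans le_sup_left)
  by_cases hβ : β = 0
  · subst hβ
    exact (Submodule.map₂_le_map₂_left le_top).trans (le_sup_right.trans le_sup_left)
  have hheight := hΓ.decompositionHeight_add_le α β
  have := hΓ.one_le_decompositionHeight hα
  have := hΓ.one_le_decompositionHeight hβ
  rw [hαβ] at hheight
  exact le_sup_of_le_right (Submodule.map₂_le_map₂ (le_gradedFiltration 𝒞 (by omega))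
    (le_gradedFiltration 𝒞 (by omega)))

end GradedFiltration

theorem map₂_sup_map₂_le_ker_map_mkQ {R C : Type*} [CommRing R] [AddCommGroup C]
    [Module R C] {I J : Submodule R C} (hIJ : I ≤ J) :
    Submodule.map₂ (mk R C C) ⊤ I ⊔ Submodule.map₂ (mk R C C) I ⊤ ≤
      LinearMap.ker (map J.mkQ J.mkQ) := by
  have hI : ∀ y ∈ I, J.mkQ y = 0 := fun y hy => (Submodule.Quotient.mk_eq_zero J).mpr (hIJ hy)
  refine sup_le (Submodule.map₂_le.mpr fun a _ b hb => ?_)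
    (Submodule.map₂_le.mpr fun a ha b _ => ?_)
  · simp [hI b hb]
  · simp [hI a ha]

section TensorKernel

variable {F C D : Type*} [Field F] [AddCommGroup C] [Module F C] [AddCommGroup D] [Module F D]

theorem eq_zero_of_mem_map₂_of_map_eq_zero {π : C →ₗ[F] D} {U : Submodule F C}
    (hU : Disjoint U (LinearMap.ker π)) {w : C ⊗[F] C}
    (hw : w ∈ Submodule.map₂ (mk F C C) U U) (hπw : map π π w = 0) : w = 0 := by
  rw [map₂_eq_range_lift_comp_mapIncl, lift_mk, LinearMap.id_comp] at hw
  obtain ⟨w, rfl⟩ := hw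
  have hinj : Function.Injective (π ∘ₗ U.subtype) := by
    rw [← LinearMap.ker_eq_bot, LinearMap.ker_comp, ← Submodule.disjoint_iff_comap_eq_bot]
    exact hU
  have hw0 : map (π ∘ₗ U.subtype) (π ∘ₗ U.subtype) w = 0 := by
    rwa [map_comp, LinearMap.comp_apply, ← mapIncl]
  rw [map_injective_of_flat_flat _ _ hinj hinj (hw0.trans (map_zero _).symm), map_zero]

theorem mem_map₂_span_singleton_left_iff {g : C} {q : Submodule F C} {w : C ⊗[F] C} :
    w ∈ Submodule.map₂ (mk F C C) (F ∙ g) q ↔ ∃ a ∈ q, w = g ⊗ₜ a := by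
  simp [Submodule.map₂_span_singleton_eq_map, eq_comm]

theorem mem_map₂_span_singleton_right_iff {g : C} {p : Submodule F C} {w : C ⊗[F] C} :
    w ∈ Submodule.map₂ (mk F C C) p (F ∙ g) ↔ ∃ b ∈ p, w = b ⊗ₜ g := by
  simp [Submodule.map₂_span_singleton_eq_map_flip, eq_comm]

/-- Split `V = F g ⊕ U`; then `U` meets `J` trivially, so `U ⊗ U` injects into `C/J ⊗ C/J`. -/
theorem exists_eq_tmul_add_tmul_of_map_mkQ_eq_zero {g : C} {V J : Submodule F C}
    (hgV : g ∈ V) (hgJ : g ∈ J) (hVJ : V ⊓ J ≤ F ∙ g) {w : C ⊗[F] C}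
    (hw : w ∈ Submodule.map₂ (mk F C C) V V) (hJw : map J.mkQ J.mkQ w = 0) :
    ∃ a b : C, w = g ⊗ₜ a + b ⊗ₜ g := by
  obtain ⟨W, hW⟩ := Submodule.exists_isCompl (F ∙ g)
  have hgV' : F ∙ g ≤ V := (Submodule.span_singleton_le_iff_mem g V).mpr hgV
  have hV : V ≤ (F ∙ g) ⊔ W ⊓ V := by
    rw [← sup_inf_assoc_of_le W hgV', hW.sup_eq_top, top_inf_eq]
  have hUJ : Disjoint (W ⊓ V) (LinearMap.ker J.mkQ) := by
    rw [Submodule.ker_mkQ, Submodule.disjoint_def]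
    intro z hz hzJ
    exact Submodule.disjoint_def.mp hW.disjoint z (hVJ ⟨hz.2, hzJ⟩) hz.1
  have hsplit : Submodule.map₂ (mk F C C) V V ≤ Submodule.map₂ (mk F C C) (F ∙ g) ⊤ ⊔
      Submodule.map₂ (mk F C C) ⊤ (F ∙ g) ⊔ Submodule.map₂ (mk F C C) (W ⊓ V) (W ⊓ V) := by
    refine (Submodule.map₂_le_map₂ hV hV).trans ?_
    rw [Submodule.map₂_sup_left]
    refine sup_le (le_sup_of_le_left (le_sup_of_le_left
      (Submodule.map₂_le_map₂_right le_top))) ?_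
    rw [Submodule.map₂_sup_right]
    exact sup_le_sup_right (le_sup_of_le_right (Submodule.map₂_le_map₂_left le_top)) _
  obtain ⟨t, ht, w', hw', rfl⟩ := Submodule.mem_sup.mp (hsplit hw)
  obtain ⟨tl, htl, tr, htr, rfl⟩ := Submodule.mem_sup.mp ht
  obtain ⟨a, -, rfl⟩ := mem_map₂_span_singleton_left_iff.mp htl
  obtain ⟨b, -, rfl⟩ := mem_map₂_span_singleton_right_iff.mp htr
  have hgJ0 : J.mkQ g = 0 := (Submodule.Quotient.mk_eq_zero J).mpr hgJ
  refine ⟨a, b, ?_⟩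
  rw [eq_zero_of_mem_map₂_of_map_eq_zero hUJ hw' (by simpa [hgJ0] using hJw), add_zero]

end TensorKernel

section Coalgebra

open Coalgebra

variable {F C : Type*} [Field F] [AddCommGroup C] [Module F C] [Coalgebra F C]

theorem counit_eq_one_of_comul_eq_tmul_self {g : C} (hg : g ≠ 0)
    (hΔg : comul (R := F) g = g ⊗ₜ g) : counit (R := F) g = 1 := by
  have h : counit (R := F) g • g = g := by
    simpa [hΔg] using congrArg (TensorProduct.lid F C) (rTensor_counit_comul (R := F) g)
  have : (counit (R := F) g - 1) • g = 0 := by rw [sub_smul, one_smul, h, sub_self]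
  exact sub_eq_zero.mp ((smul_eq_zero.mp this).resolve_right hg)

theorem eq_counit_smul_add_of_comul_eq {g x a b : C}
    (h : comul (R := F) x = g ⊗ₜ a + b ⊗ₜ g) :
    x = counit (R := F) g • a + counit (R := F) b • g := by
  simpa [h] using (congrArg (TensorProduct.lid F C) (rTensor_counit_comul (R := F) x)).symm

theorem eq_add_counit_smul_of_comul_eq {g x a b : C}
    (h : comul (R := F) x = g ⊗ₜ a + b ⊗ₜ g) :
    x = counit (R := F) a • g + counit (R := F) g • b := by
  simpa [h] using (congrArg (TensorProduct.rid F C) (lTensor_counit_comul (R := F) x)).symm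

/-- The counit identities pin down `a` and `b` up to multiples of `g`. -/
theorem comul_eq_of_comul_eq_tmul_add_tmul {g x a b : C} (hΔg : comul (R := F) g = g ⊗ₜ g)
    (h : comul (R := F) x = g ⊗ₜ a + b ⊗ₜ g) :
    comul (R := F) x = x ⊗ₜ g + g ⊗ₜ x - counit (R := F) x • (g ⊗ₜ g) := by
  rcases eq_or_ne g 0 with rfl | hg
  · simp [h]
  have hεg := counit_eq_one_of_comul_eq_tmul_self hg hΔg
  have hx₁ := eq_counit_smul_add_of_comul_eq h
  have hx₂ := eq_add_counit_smul_of_comul_eq h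
  rw [hεg, one_smul] at hx₁ hx₂
  have hεx : counit (R := F) x = counit a + counit b := by
    conv_lhs => rw [hx₁]
    simp [hεg]
  calc comul (R := F) x = g ⊗ₜ a + b ⊗ₜ g := h
    _ = (counit (R := F) a • g + b) ⊗ₜ g + g ⊗ₜ (a + counit (R := F) b • g) -
        (counit (R := F) a + counit (R := F) b) • (g ⊗ₜ g) := by
      simp only [tmul_add, add_tmul, smul_tmul, tmul_smul, add_smul]
      abel
    _ = x ⊗ₜ g + g ⊗ₜ x - counit (R := F) x • (g ⊗ₜ g) := by rw [← hx₁, ← hx₂, hεx]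

theorem comul_eq_of_mem_map₂_of_mem_coideal {g x : C} {V I : Submodule F C}
    (hΔg : comul (R := F) g = g ⊗ₜ g) (hgV : g ∈ V) (hIV : I ⊓ V ≤ F ∙ g)
    (hΔx : comul (R := F) x ∈ Submodule.map₂ (mk F C C) (F ∙ g) ⊤ ⊔
      Submodule.map₂ (mk F C C) ⊤ (F ∙ g) ⊔ Submodule.map₂ (mk F C C) V V)
    (hΔxI : comul (R := F) x ∈
      Submodule.map₂ (mk F C C) ⊤ I ⊔ Submodule.map₂ (mk F C C) I ⊤) :
    comul (R := F) x = x ⊗ₜ g + g ⊗ₜ x - counit (R := F) x • (g ⊗ₜ g) := by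
  obtain ⟨t, ht, w, hw, hΔxtw⟩ := Submodule.mem_sup.mp hΔx
  obtain ⟨tl, htl, tr, htr, rfl⟩ := Submodule.mem_sup.mp ht
  obtain ⟨u, -, rfl⟩ := mem_map₂_span_singleton_left_iff.mp htl
  obtain ⟨v, -, rfl⟩ := mem_map₂_span_singleton_right_iff.mp htr
  set J := (F ∙ g) ⊔ I
  have hgJ : g ∈ J := Submodule.mem_sup_left (Submodule.mem_span_singleton_self g)
  have hVJ : V ⊓ J ≤ F ∙ g := by
    rw [inf_comm, sup_inf_assoc_of_le I ((Submodule.span_singleton_le_iff_mem g V).mpr hgV)]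
    exact sup_le le_rfl hIV
  have hJw : map J.mkQ J.mkQ w = 0 := by
    have hgJ0 : J.mkQ g = 0 := (Submodule.Quotient.mk_eq_zero J).mpr hgJ
    simpa [← hΔxtw, hgJ0] using map₂_sup_map₂_le_ker_map_mkQ (J := J) le_sup_right hΔxI
  obtain ⟨a, b, rfl⟩ := exists_eq_tmul_add_tmul_of_map_mkQ_eq_zero hgV hgJ hVJ hw hJw
  refine comul_eq_of_comul_eq_tmul_add_tmul (a := u + a) (b := v + b) hΔg ?_
  rw [← hΔxtw, tmul_add, add_tmul]
  abel

end Coalgebra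

/-- Let `Γ` be a commutative additive monoid with bounded
decompositions and `C` an `F`-coalgebra graded by `Γ` with `Δ` respecting the grading,
and suppose `C_0 = F·g` for a group-like element `g` (`Δ(g) = g ⊗ g`). Then every
nonzero coideal `I` of `C` contains a nonzero element `x` with
`Δ(x) = x ⊗ g + g ⊗ x − ε(x)·(g ⊗ g)`. -/
theorem statement16 (F : Type*) [Field F]
    (Γ : Type*) [AddCommMonoid Γ] [DecidableEq Γ]
    -- `Γ` has bounded decompositions
    (hbdd : ∀ γ : Γ, γ ≠ 0 → ∃ h : ℕ, ∀ l : List Γ,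
      (∀ x ∈ l, x ≠ 0) → l.sum = γ → l.length ≤ h)
    (C : Type*) [AddCommGroup C] [Module F C] [Coalgebra F C]
    (𝒞 : Γ → Submodule F C)
    (hinternal : DirectSum.IsInternal 𝒞)
    -- `Δ` respects the grading
    (hΔ : ∀ γ : Γ, ∀ x ∈ 𝒞 γ, Coalgebra.comul x ∈
      ⨆ p : {p : Γ × Γ // p.1 + p.2 = γ},
        Submodule.map₂ (TensorProduct.mk F C C) (𝒞 (p : Γ × Γ).1) (𝒞 (p : Γ × Γ).2))
    (g : C) (hg0 : 𝒞 0 = Submodule.span F {g})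
    (hgrp : Coalgebra.comul g = g ⊗ₜ[F] g)
    (I : Submodule F C) (hI : I ≠ ⊥)
    -- `I` is a coideal: `Δ(I) ⊆ C ⊗ I + I ⊗ C`
    (hcoideal : ∀ x ∈ I, Coalgebra.comul x ∈
      Submodule.map₂ (TensorProduct.mk F C C) ⊤ I ⊔
        Submodule.map₂ (TensorProduct.mk F C C) I ⊤) :
    ∃ x ∈ I, x ≠ 0 ∧ Coalgebra.comul x =
      x ⊗ₜ[F] g + g ⊗ₜ[F] x - (Coalgebra.counit x : F) • (g ⊗ₜ[F] g) := by
  have hmeet : ∃ n, gradedFiltration 𝒞 n ⊓ I ≠ ⊥ := by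
    by_contra! h
    refine hI (eq_bot_iff.mpr ?_)
    rw [← top_inf_eq I, ← iSup_gradedFiltration hinternal.submodule_iSup_eq_top,
      (monotone_gradedFiltration 𝒞).directed_le.iSup_inf_eq, iSup_eq_bot.mpr h]
  obtain ⟨x, ⟨hxFil, hxI⟩, hx0⟩ := Submodule.exists_mem_ne_zero_of_ne_bot (Nat.find_spec hmeet)
  refine ⟨x, hxI, hx0, ?_⟩
  have hgFil : F ∙ g ≤ gradedFiltration 𝒞 (Nat.find hmeet - 1) := by
    rw [← hg0, ← gradedFiltration_zero hbdd 𝒞]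
    exact monotone_gradedFiltration 𝒞 (Nat.zero_le _)
  have hIFil : I ⊓ gradedFiltration 𝒞 (Nat.find hmeet - 1) ≤ F ∙ g := by
    -- for `n = 0` the level `n - 1` is again `F₀ = F g`
    rcases Nat.eq_zero_or_pos (Nat.find hmeet) with h0 | hpos
    · rw [h0, Nat.zero_sub, gradedFiltration_zero hbdd, hg0]
      exact inf_le_right
    · rw [inf_comm, not_not.mp (Nat.find_min hmeet (Nat.sub_lt hpos one_pos))]
      exact bot_le
  have hΔx := comul_mem_gradedFiltration hbdd hΔ hxFil
  rw [hg0] at hΔx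
  exact comul_eq_of_mem_map₂_of_mem_coideal hgrp
    (hgFil (Submodule.mem_span_singleton_self g)) hIFil hΔx (hcoideal x hxI)
end
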